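/- Let t be an eigenvalue of A of multiplicity m with ker(A−t) ∩ L = {0}. If t^- < t and F_L^j(t^-) ≤ t − t^-, then t^- − F_L^j(t^-) ≤ n_{j+m}^-(t), i.e. the lower bound skips past the eigenvalue t and bounds the (j+m)-th spectral point to the left of t. -/

import Mathlib

open scoped InnerProductSpace

variable {H : Type*} [NormedAddCommGroup H] [InnerProductSpace ℂ H] [CompleteSpace H]

/-- `Fapp A L j t` : the `j`-th min-max value of `‖(A-t)u‖/‖u‖` over
`j`-dimensional subspaces of `L`. -/
noncomputable def Fapp (A : H →L[ℂ] H) (L : Submodule ℂ H) (j : ℕ) (t : ℝ) : ℝ :=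
  sInf {r : ℝ | 0 ≤ r ∧ ∃ V : Submodule ℂ H, V ≤ L ∧ Module.finrank ℂ V = j ∧
    ∀ u ∈ V, ‖A u - (t : ℂ) • u‖ ≤ r * ‖u‖}

/-- `dd A j t` : the `j`-th min-max value of `‖(A-t)u‖/‖u‖` over all
`j`-dimensional subspaces of the space. -/
noncomputable def dd (A : H →L[ℂ] H) (j : ℕ) (t : ℝ) : ℝ :=
  sInf {r : ℝ | 0 ≤ r ∧ ∃ V : Submodule ℂ H, Module.finrank ℂ V = j ∧
    ∀ u ∈ V, ‖A u - (t : ℂ) • u‖ ≤ r * ‖u‖}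

/-- `tr 1_{[a,b]}(A) ≥ j` : there is a `j`-dimensional subspace on which the
quadratic form of `(A-a)(A-b)` is non-positive. -/
def countGeIcc (A : H →L[ℂ] H) (a b : ℝ) (j : ℕ) : Prop :=
  ∃ V : Submodule ℂ H, Module.finrank ℂ V = j ∧
    ∀ u ∈ V, (inner ℂ (A u - (a : ℂ) • u) (A u - (b : ℂ) • u) : ℂ).re ≤ 0

/-- `tr 1_{(a,b]}(A) ≥ j`. -/
def countGeIoc (A : H →L[ℂ] H) (a b : ℝ) (j : ℕ) : Prop :=
  ∃ V : Submodule ℂ H, Module.finrank ℂ V = j ∧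
    (∀ u ∈ V, (inner ℂ (A u - (a : ℂ) • u) (A u - (b : ℂ) • u) : ℂ).re ≤ 0) ∧
    V ⊓ LinearMap.ker (((A - (a : ℂ) • (1 : H →L[ℂ] H)) : H →L[ℂ] H) : H →ₗ[ℂ] H) = ⊥

/-- `tr 1_{[a,b)}(A) ≥ j`. -/
def countGeIco (A : H →L[ℂ] H) (a b : ℝ) (j : ℕ) : Prop :=
  ∃ V : Submodule ℂ H, Module.finrank ℂ V = j ∧
    (∀ u ∈ V, (inner ℂ (A u - (a : ℂ) • u) (A u - (b : ℂ) • u) : ℂ).re ≤ 0) ∧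
    V ⊓ LinearMap.ker (((A - (b : ℂ) • (1 : H →L[ℂ] H)) : H →L[ℂ] H) : H →ₗ[ℂ] H) = ⊥

/-- `nminus A j t` : the `j`-th spectral point of `A` to the left of `t`,
counting multiplicities, i.e. `sup {s < t : tr 1_{(s,t]}(A) ≥ j}`. -/
noncomputable def nminus (A : H →L[ℂ] H) (j : ℕ) (t : ℝ) : ℝ :=
  sSup {s : ℝ | s < t ∧ countGeIoc A s t j}

/-- `nplus A j t` : the `j`-th spectral point of `A` to the right of `t`. -/
noncomputable def nplus (A : H →L[ℂ] H) (j : ℕ) (t : ℝ) : ℝ :=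
  sInf {s : ℝ | t < s ∧ countGeIco A t s j}

/-- The real spectrum of `A`. -/
def specRe (A : H →L[ℂ] H) : Set ℝ := {x : ℝ | (x : ℂ) ∈ spectrum ℂ A}

/-!
By compactness of orthonormal `j`-frames in `L`, the infimum `F = F_L^j(t⁻)` is attained on some
`j`-dimensional `V ≤ L`: `‖(A - t⁻)v‖ ≤ F ‖v‖` on `V`. For `s ≤ t⁻ - F` we have
`[t⁻ - F, t⁻ + F] ⊆ [s, t]`, and `Re ⟪(A - s)u, (A - t)u⟫ = ‖(A - (s+t)/2)u‖² - ((t-s)/2)² ‖u‖²`,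
so this form is nonpositive on `V`. Since `A` is symmetric, adding a vector of `ker (A - t)` does
not change the form, so it is nonpositive on the `(j + m)`-dimensional space `V ⊕ ker (A - t)`.
This space meets `ker (A - s)` for only finitely many `s`, so all other `s < t⁻ - F` count towards
`n_{j+m}^-(t)`.
-/

open Module Submodule

section Frames

variable {𝕜 E F : Type*} [RCLike 𝕜] [NormedAddCommGroup E] [InnerProductSpace 𝕜 E]
  [NormedAddCommGroup F] [NormedSpace 𝕜 F] {j : ℕ}

noncomputable def frameMap (u : Fin j → E) : EuclideanSpace 𝕜 (Fin j) →L[𝕜] E :=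
  ∑ i, (EuclideanSpace.proj i).smulRight (u i)

@[simp]
theorem frameMap_apply (u : Fin j → E) (c : EuclideanSpace 𝕜 (Fin j)) :
    frameMap u c = ∑ i, c i • u i := by
  simp [frameMap]

theorem continuous_frameMap :
    Continuous (frameMap : (Fin j → E) → EuclideanSpace 𝕜 (Fin j) →L[𝕜] E) :=
  continuous_finsetSum _ fun i _ =>
    (ContinuousLinearMap.smulRightL 𝕜 _ E (EuclideanSpace.proj i)).continuous.comp
      (continuous_apply i)

theorem Orthonormal.norm_frameMap_apply {u : Fin j → E} (hu : Orthonormal 𝕜 u)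
    (c : EuclideanSpace 𝕜 (Fin j)) : ‖frameMap u c‖ = ‖c‖ := by
  have hsq : ‖frameMap u c‖ ^ 2 = ‖c‖ ^ 2 := by
    rw [EuclideanSpace.norm_sq_eq, ← inner_self_eq_norm_sq (𝕜 := 𝕜), frameMap_apply,
      hu.inner_sum, map_sum]
    simp [RCLike.conj_mul]
  exact (pow_left_inj₀ (norm_nonneg _) (norm_nonneg _) two_ne_zero).1 hsq

theorem exists_orthonormal_of_le_finrank [FiniteDimensional 𝕜 E] (hj : j ≤ finrank 𝕜 E) :
    ∃ u : Fin j → E, Orthonormal 𝕜 u :=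
  ⟨fun i => stdOrthonormalBasis 𝕜 E (Fin.castLE hj i),
    (stdOrthonormalBasis 𝕜 E).orthonormal.comp _ (Fin.castLE_injective hj)⟩

theorem isCompact_setOf_orthonormal [FiniteDimensional 𝕜 E] :
    IsCompact {u : Fin j → E | Orthonormal 𝕜 u} := by
  have := FiniteDimensional.proper_rclike 𝕜 E
  have hclosed : IsClosed {u : Fin j → E | Orthonormal 𝕜 u} := by
    simp only [orthonormal_iff_ite, Set.ofPred_forall]
    exact isClosed_iInter fun i => isClosed_iInter fun k =>
      isClosed_eq ((continuous_apply i).inner (continuous_apply k)) continuous_const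
  refine Metric.isCompact_of_isClosed_isBounded hclosed
    ((Metric.isBounded_closedBall (x := 0) (r := 1)).subset fun u hu => ?_)
  rw [Metric.mem_closedBall, dist_zero_right, pi_norm_le_iff_of_nonneg zero_le_one]
  exact fun i => (hu.norm_eq_one i).le

theorem exists_isLeast_norm_le_mul_on_finrank_eq (B : E →L[𝕜] F) (L : Submodule 𝕜 E)
    [FiniteDimensional 𝕜 L] (hj : j ≤ finrank 𝕜 L) :
    ∃ c, IsLeast {r : ℝ | 0 ≤ r ∧ ∃ V : Submodule 𝕜 E, V ≤ L ∧ finrank 𝕜 V = j ∧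
      ∀ u ∈ V, ‖B u‖ ≤ r * ‖u‖} c := by
  set BL := B ∘L L.subtypeL
  have hcont : Continuous fun u : Fin j → L => ‖BL ∘L frameMap (𝕜 := 𝕜) u‖ :=
    (continuous_const.clm_comp continuous_frameMap).norm
  obtain ⟨u₀, hu₀, hmin⟩ := isCompact_setOf_orthonormal.exists_isMinOn
    (exists_orthonormal_of_le_finrank hj) hcont.continuousOn
  refine ⟨‖BL ∘L frameMap u₀‖,
    ⟨norm_nonneg _, span 𝕜 (Set.range fun i => (u₀ i : E)), ?_, ?_, ?_⟩, ?_⟩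
  · exact span_le.2 (Set.range_subset_iff.2 fun i => (u₀ i).2)
  · have hv₀ : Orthonormal 𝕜 fun i => (u₀ i : E) := hu₀.comp_linearIsometry L.subtypeₗᵢ
    rw [finrank_span_eq_card hv₀.linearIndependent, Fintype.card_fin]
  · intro x hx
    obtain ⟨c, rfl⟩ := (mem_span_range_iff_exists_fun 𝕜).1 hx
    have hc : ∑ i, c i • (u₀ i : E) = frameMap u₀ (WithLp.toLp 2 c) := by simp
    rw [hc]
    calc ‖B (frameMap u₀ (WithLp.toLp 2 c) : E)‖
        = ‖(BL ∘L frameMap u₀) (WithLp.toLp 2 c)‖ := rfl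
      _ ≤ ‖BL ∘L frameMap u₀‖ * ‖WithLp.toLp 2 c‖ := ContinuousLinearMap.le_opNorm _ _
      _ = ‖BL ∘L frameMap u₀‖ * ‖(frameMap u₀ (WithLp.toLp 2 c) : E)‖ := by
        rw [← hu₀.norm_frameMap_apply]
        rfl
  · rintro r ⟨hr, W, hWL, hW, hbound⟩
    have : FiniteDimensional 𝕜 W := finiteDimensional_of_le hWL
    obtain ⟨w, hw⟩ := exists_orthonormal_of_le_finrank (E := W) hW.ge
    set u : Fin j → L := fun i => ⟨w i, hWL (w i).2⟩
    have hu : Orthonormal 𝕜 u :=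
      L.subtypeₗᵢ.orthonormal_comp_iff.1 (hw.comp_linearIsometry W.subtypeₗᵢ)
    refine (isMinOn_iff.1 hmin u hu).trans (ContinuousLinearMap.opNorm_le_bound _ hr fun c => ?_)
    have hmem : ((frameMap u c : L) : E) ∈ W := by
      simpa using W.sum_mem fun i _ => W.smul_mem (c i) (w i).2
    rw [← hu.norm_frameMap_apply c]
    exact hbound _ hmem

end Frames

theorem Module.End.finite_setOf_inf_eigenspace_ne_bot {K M : Type*} [Field K] [AddCommGroup M]
    [Module K M] (f : End K M) (V : Submodule K M) [FiniteDimensional K V] :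
    {μ : K | V ⊓ f.eigenspace μ ≠ ⊥}.Finite := by
  have hvec : ∀ μ : {μ : K | V ⊓ f.eigenspace μ ≠ ⊥}, ∃ x ∈ V ⊓ f.eigenspace μ, x ≠ 0 :=
    fun μ => Submodule.exists_mem_ne_zero_of_ne_bot μ.2
  choose x hxV hx0 using hvec
  have hli : LinearIndependent K x :=
    f.eigenvectors_linearIndependent _ x fun μ => ⟨(hxV μ).2, hx0 μ⟩
  have hliV : LinearIndependent K fun μ => (⟨x μ, (hxV μ).1⟩ : V) :=
    LinearIndependent.of_comp V.subtype hli
  exact Set.finite_coe_iff.1 hliV.finite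

section Spectral

variable {E : Type*} [NormedAddCommGroup E] [InnerProductSpace ℂ E]

theorem isLeast_Fapp (A : E →L[ℂ] E) (L : Submodule ℂ E) [FiniteDimensional ℂ L] {j : ℕ}
    (hj : j ≤ finrank ℂ L) (t : ℝ) :
    IsLeast {r : ℝ | 0 ≤ r ∧ ∃ V : Submodule ℂ E, V ≤ L ∧ finrank ℂ V = j ∧
      ∀ u ∈ V, ‖A u - (t : ℂ) • u‖ ≤ r * ‖u‖} (Fapp A L j t) := by
  obtain ⟨c, hc⟩ := exists_isLeast_norm_le_mul_on_finrank_eq (A - (t : ℂ) • 1) L hj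
  simp only [sub_apply, smul_apply, one_apply_eq_self] at hc
  rwa [Fapp, hc.csInf_eq]

theorem re_inner_add_smul_sub_smul (y u : E) (h : ℝ) :
    (⟪y + (h : ℂ) • u, y - (h : ℂ) • u⟫_ℂ).re = ‖y‖ ^ 2 - h ^ 2 * ‖u‖ ^ 2 := by
  have hy : (⟪y, y⟫_ℂ).re = ‖y‖ ^ 2 := inner_self_eq_norm_sq (𝕜 := ℂ) y
  have hu : (⟪u, u⟫_ℂ).re = ‖u‖ ^ 2 := inner_self_eq_norm_sq (𝕜 := ℂ) u
  rw [inner_add_left, inner_sub_right, inner_sub_right, inner_smul_left, inner_smul_right,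
    inner_smul_right, inner_smul_left, Complex.conj_ofReal, ← inner_conj_symm y u]
  simp only [Complex.add_re, Complex.sub_re, Complex.mul_re, Complex.conj_re, Complex.conj_im,
    Complex.ofReal_re, Complex.ofReal_im, hy, hu]
  ring

theorem re_inner_sub_smul_sub_smul (x u : E) (a b : ℝ) :
    (⟪x - (a : ℂ) • u, x - (b : ℂ) • u⟫_ℂ).re =
      ‖x - (((a + b) / 2 : ℝ) : ℂ) • u‖ ^ 2 - ((b - a) / 2) ^ 2 * ‖u‖ ^ 2 := by
  rw [← re_inner_add_smul_sub_smul]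
  congr 2 <;> push_cast <;> module

theorem re_inner_sub_smul_sub_smul_nonpos {x u : E} {c r a b : ℝ}
    (hx : ‖x - (c : ℂ) • u‖ ≤ r * ‖u‖) (ha : a ≤ c - r) (hb : c + r ≤ b) :
    (⟪x - (a : ℂ) • u, x - (b : ℂ) • u⟫_ℂ).re ≤ 0 := by
  have hmid : ‖x - (((a + b) / 2 : ℝ) : ℂ) • u‖ ≤ (b - a) / 2 * ‖u‖ :=
    calc ‖x - (((a + b) / 2 : ℝ) : ℂ) • u‖
        = ‖(x - (c : ℂ) • u) + ((c - (a + b) / 2 : ℝ) : ℂ) • u‖ := by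
          congr 1; push_cast; module
      _ ≤ r * ‖u‖ + |c - (a + b) / 2| * ‖u‖ := by
          grw [norm_add_le, hx, norm_smul, Complex.norm_real, Real.norm_eq_abs]
      _ ≤ (b - a) / 2 * ‖u‖ := by
          have hc : |c - (a + b) / 2| ≤ (b - a) / 2 - r := abs_le.2 ⟨by linarith, by linarith⟩
          rw [← add_mul]
          gcongr
          linarith
  rw [re_inner_sub_smul_sub_smul, sub_nonpos, ← mul_pow]
  exact pow_le_pow_left₀ (norm_nonneg _) hmid 2

theorem ContinuousLinearMap.ker_sub_smul_one (A : E →L[ℂ] E) (μ : ℂ) :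
    LinearMap.ker ((A - μ • (1 : E →L[ℂ] E) : E →L[ℂ] E) : E →ₗ[ℂ] E) =
      End.eigenspace (A : E →ₗ[ℂ] E) μ := by
  rw [End.eigenspace_def]
  rfl

theorem finite_setOf_inf_ker_sub_smul_one_ne_bot (A : E →L[ℂ] E) (V : Submodule ℂ E)
    [FiniteDimensional ℂ V] :
    {μ : ℝ | V ⊓ LinearMap.ker ((A - (μ : ℂ) • (1 : E →L[ℂ] E) : E →L[ℂ] E) : E →ₗ[ℂ] E) ≠ ⊥}
      |>.Finite := by
  simp only [A.ker_sub_smul_one]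
  exact (End.finite_setOf_inf_eigenspace_ne_bot (A : End ℂ E) V).preimage
    Complex.ofReal_injective.injOn

theorem inner_sub_smul_add_of_mem_ker {A : E →L[ℂ] E} (hA : (A : E →ₗ[ℂ] E).IsSymmetric)
    {t : ℝ} {k : E}
    (hk : k ∈ LinearMap.ker ((A - (t : ℂ) • (1 : E →L[ℂ] E) : E →L[ℂ] E) : E →ₗ[ℂ] E))
    (v : E) (s : ℂ) :
    ⟪A (v + k) - s • (v + k), A (v + k) - (t : ℂ) • (v + k)⟫_ℂ =
      ⟪A v - s • v, A v - (t : ℂ) • v⟫_ℂ := by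
  rw [A.ker_sub_smul_one, End.mem_eigenspace_iff] at hk
  have hk' : A k = (t : ℂ) • k := hk
  have hsym : ⟪A k, v⟫_ℂ = ⟪k, A v⟫_ℂ := hA k v
  have horth : ⟪k, A v - (t : ℂ) • v⟫_ℂ = 0 := by
    rw [inner_sub_right, inner_smul_right, ← hsym, hk', inner_smul_left,
      Complex.conj_ofReal, sub_self]
  have hsplit : A (v + k) - s • (v + k) = (A v - s • v) + ((t : ℂ) - s) • k := by
    rw [map_add, hk']; module
  have hker : A (v + k) - (t : ℂ) • (v + k) = A v - (t : ℂ) • v := by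
    rw [map_add, hk']; module
  rw [hsplit, hker, inner_add_left, inner_smul_left, horth, mul_zero, add_zero]

theorem re_inner_nonpos_of_mem_sup_ker {A : E →L[ℂ] E} (hA : (A : E →ₗ[ℂ] E).IsSymmetric)
    {s t : ℝ} {V : Submodule ℂ E}
    (hV : ∀ v ∈ V, (⟪A v - (s : ℂ) • v, A v - (t : ℂ) • v⟫_ℂ).re ≤ 0) :
    ∀ u ∈ V ⊔ LinearMap.ker ((A - (t : ℂ) • (1 : E →L[ℂ] E) : E →L[ℂ] E) : E →ₗ[ℂ] E),
      (⟪A u - (s : ℂ) • u, A u - (t : ℂ) • u⟫_ℂ).re ≤ 0 := by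
  intro u hu
  obtain ⟨v, hv, k, hk, rfl⟩ := Submodule.mem_sup.1 hu
  rw [inner_sub_smul_add_of_mem_ker hA hk]
  exact hV v hv

end Spectral

theorem le_csSup_of_Iio_diff_subset {S T : Set ℝ} (hS : BddAbove S) (hT : T.Finite) {a : ℝ}
    (h : Set.Iio a \ T ⊆ S) : a ≤ sSup S := by
  by_contra! ha
  obtain ⟨s, ⟨hs, hsa⟩, hsT⟩ := ((Set.Ioo_infinite ha).sdiff hT).nonempty
  exact (le_csSup hS (h ⟨hsa, hsT⟩)).not_gt hs

theorem stmt_17_general (A : H →L[ℂ] H) (hA : IsSelfAdjoint A)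
    (L : Submodule ℂ H) [FiniteDimensional ℂ L]
    (j : ℕ) (hj : j ≤ Module.finrank ℂ L)
    (t tm : ℝ) (m : ℕ) (hm1 : 1 ≤ m)
    (hm : Module.finrank ℂ
      (LinearMap.ker (((A - (t : ℂ) • (1 : H →L[ℂ] H)) : H →L[ℂ] H) : H →ₗ[ℂ] H)) = m)
    (hker : L ⊓ LinearMap.ker (((A - (t : ℂ) • (1 : H →L[ℂ] H)) : H →L[ℂ] H) : H →ₗ[ℂ] H) = ⊥)
    (hF : Fapp A L j tm ≤ t - tm) :
    tm - Fapp A L j tm ≤ nminus A (j + m) t := by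
  set K := LinearMap.ker (((A - (t : ℂ) • (1 : H →L[ℂ] H)) : H →L[ℂ] H) : H →ₗ[ℂ] H)
  obtain ⟨hF0, V, hVL, hVj, hV⟩ := (isLeast_Fapp A L hj tm).1
  have : FiniteDimensional ℂ K := Module.finite_of_finrank_pos (hm ▸ hm1)
  have : FiniteDimensional ℂ V := finiteDimensional_of_le hVL
  have hWj : finrank ℂ ↥(V ⊔ K) = j + m := by
    have hVK : V ⊓ K = ⊥ := eq_bot_iff.2 (hker ▸ inf_le_inf_right K hVL)
    have := Submodule.finrank_sup_add_finrank_inf_eq V K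
    rw [hVK, finrank_bot, hVj, hm] at this
    omega
  refine le_csSup_of_Iio_diff_subset ⟨t, fun s hs => hs.1.le⟩
    (finite_setOf_inf_ker_sub_smul_one_ne_bot A (V ⊔ K)) ?_
  rintro s ⟨hs, hsW⟩
  have hsF : s < tm - Fapp A L j tm := hs
  refine ⟨by linarith, V ⊔ K, hWj, re_inner_nonpos_of_mem_sup_ker hA.isSymmetric fun v hv =>
    re_inner_sub_smul_sub_smul_nonpos (hV v hv) hsF.le (by linarith), not_not.1 hsW⟩

/-- if `t` is an eigenvalue of `A` of multiplicity `m` with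
`ker(A-t) ∩ L = {0}`, `t⁻ < t` and `F_L^j(t⁻) ≤ t - t⁻`, then
`t⁻ - F_L^j(t⁻) ≤ n_{j+m}^-(t)`. -/
theorem stmt_17 (A : H →L[ℂ] H) (hA : IsSelfAdjoint A)
    (L : Submodule ℂ H) [FiniteDimensional ℂ L]
    (j : ℕ) (hj1 : 1 ≤ j) (hj : j ≤ Module.finrank ℂ L)
    (t tm : ℝ) (m : ℕ) (hm1 : 1 ≤ m)
    (hm : Module.finrank ℂ
      (LinearMap.ker (((A - (t : ℂ) • (1 : H →L[ℂ] H)) : H →L[ℂ] H) : H →ₗ[ℂ] H)) = m)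
    (hker : L ⊓ LinearMap.ker (((A - (t : ℂ) • (1 : H →L[ℂ] H)) : H →L[ℂ] H) : H →ₗ[ℂ] H) = ⊥)
    (htm : tm < t) (hF : Fapp A L j tm ≤ t - tm) :
    tm - Fapp A L j tm ≤ nminus A (j + m) t :=
  stmt_17_general A hA L j hj t tm m hm1 hm hker hF
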